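/- arXiv:1809.00742 — 5 statements merged into one kernel-verified Lean document; each statement's English description precedes it below -/
import Mathlib

section
/- Let P be a set of forbidden patterns (possibly of different lengths). Then P is right-justified if and only if for every pattern τ in P for which τ^← exists (i.e., the largest entry of τ is not in the first position), the permutation τ^← contains some pattern belonging to P. -/
open Equiv

/-- The pattern `σ` (a length-`k` permutation) is contained in the length-`n`
permutation `π` : some subsequence of `π` is order isomorphic to `σ`. -/
def Contains {k n : ℕ} (σ : Equiv.Perm (Fin k)) (π : Equiv.Perm (Fin n)) : Prop :=
  ∃ f : Fin k → Fin n, StrictMono f ∧ ∀ a b : Fin k, σ a < σ b ↔ π (f a) < π (f b)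

/-- A set of forbidden patterns, of possibly different lengths. -/
abbrev PatternSet : Type := Set ((k : ℕ) × Equiv.Perm (Fin k))

/-- `π` avoids every pattern of `P`, i.e. `π ∈ S_n(P)`. -/
def AvoidsSet {n : ℕ} (π : Equiv.Perm (Fin n)) (P : PatternSet) : Prop :=
  ∀ τ ∈ P, ¬ Contains τ.2 π

/-- The (0-indexed) position of the largest entry of `α`. -/
def maxPos {n : ℕ} (α : Equiv.Perm (Fin (n + 1))) : Fin (n + 1) := α⁻¹ (Fin.last n)

/-- `α^→` : transpose the largest entry with the entry immediately to its right
(meaningful when `maxPos α ≠ Fin.last n`, i.e. the largest entry is not last). -/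
def moveRight {n : ℕ} (α : Equiv.Perm (Fin (n + 1))) : Equiv.Perm (Fin (n + 1)) :=
  α * Equiv.swap (maxPos α) (maxPos α + 1)

/-- `α^←` : transpose the largest entry with the entry immediately to its left
(meaningful when `maxPos α ≠ 0`, i.e. the largest entry is not first). -/
def moveLeft {n : ℕ} (α : Equiv.Perm (Fin (n + 1))) : Equiv.Perm (Fin (n + 1)) :=
  α * Equiv.swap (maxPos α) (maxPos α - 1)

/-- `P` is right-justified : moving the largest entry of a `P`-avoiding permutation one
position to the right again yields a `P`-avoiding permutation. -/
def RightJustified (P : PatternSet) : Prop :=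
  ∀ (n : ℕ) (α : Equiv.Perm (Fin (n + 1))),
    AvoidsSet α P → maxPos α ≠ Fin.last n → AvoidsSet (moveRight α) P

/-- `α^{↓i}` : insert the new largest entry into site `i` of `α`; the `n+1` sites of a
length-`n` permutation are numbered `1, …, n+1` from right to left, so the new largest
entry lands at 0-indexed position `n - (i - 1)`. -/
def insertMax {n : ℕ} (α : Equiv.Perm (Fin n)) (i : ℕ) : Equiv.Perm (Fin (n + 1)) :=
  (finSuccEquivLast.permCongr.symm α.optionCongr) *
    (Fin.revPerm * Fin.cycleRange (Fin.rev (⟨n - (i - 1), by omega⟩ : Fin (n + 1))) *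
      Fin.revPerm)

/-- Site `i` of `α ∈ S_n(P)` is active (with respect to `P`). -/
def ActiveSite {n : ℕ} (P : PatternSet) (α : Equiv.Perm (Fin n)) (i : ℕ) : Prop :=
  1 ≤ i ∧ i ≤ n + 1 ∧ AvoidsSet (insertMax α i) P

/-- The number of active sites of `α` with respect to `P`. -/
noncomputable def numActive {n : ℕ} (P : PatternSet) (α : Equiv.Perm (Fin n)) : ℕ :=
  Set.ncard {i : ℕ | ActiveSite P α i}

/-- Delete the largest entry of a length-`(n+1)` permutation. -/
def deleteMax {n : ℕ} (π : Equiv.Perm (Fin (n + 1))) : Equiv.Perm (Fin n) :=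
  Equiv.removeNone (finSuccEquivLast.permCongr
    (π * (Fin.revPerm * Fin.cycleRange (Fin.rev (maxPos π)) * Fin.revPerm)⁻¹))

/-- The pattern `321`. -/
def perm321 : Equiv.Perm (Fin 3) := ⟨![2, 1, 0], ![2, 1, 0], by decide, by decide⟩
/-- The pattern `312`. -/
def perm312 : Equiv.Perm (Fin 3) := ⟨![2, 0, 1], ![1, 2, 0], by decide, by decide⟩
/-- The pattern `231`. -/
def perm231 : Equiv.Perm (Fin 3) := ⟨![1, 2, 0], ![2, 0, 1], by decide, by decide⟩
/-- The pattern `2431`. -/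
def perm2431 : Equiv.Perm (Fin 4) := ⟨![1, 3, 2, 0], ![3, 0, 2, 1], by decide, by decide⟩
/-- The pattern `4321`. -/
def perm4321 : Equiv.Perm (Fin 4) := ⟨![3, 2, 1, 0], ![3, 2, 1, 0], by decide, by decide⟩

/-- The pattern `(m+1) 1 2 … m` of length `m + 1`. -/
def sigmaM (m : ℕ) : Equiv.Perm (Fin (m + 1)) := (finRotate (m + 1))⁻¹

/-- The pattern `p (p+1) 1 2 … (p-1)` of length `p + 1`. -/
def sigmaP (p : ℕ) : Equiv.Perm (Fin (p + 1)) := ((finRotate (p + 1))⁻¹) ^ 2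

/-- The largest entry of `α` plays the role of `3` in an occurrence of the pattern
`231` : there are positions `a < b < c` with `α b` largest, `α a < α b` and `α c < α a`. -/
def MaxIn231 {n : ℕ} (α : Equiv.Perm (Fin n)) : Prop :=
  ∃ a b c : Fin n, a < b ∧ b < c ∧ (∀ x, α x ≤ α b) ∧ α a < α b ∧ α c < α a

/-- The last `p` entries of `α` are in decreasing order. -/
def LastDecreasing {n : ℕ} (α : Equiv.Perm (Fin n)) (p : ℕ) : Prop :=
  ∀ a b : Fin n, n - p ≤ (a : ℕ) → a < b → α b < α a

open Classical in
/-- The color `d(α)` : it is `1` iff the largest entry of `α` plays the role of `3` in an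
occurrence of `231` and the length-`p` suffix of `α` is not decreasing; otherwise `0`. -/
noncomputable def colorD {n : ℕ} (p : ℕ) (α : Equiv.Perm (Fin n)) : ℕ :=
  if MaxIn231 α ∧ ¬ LastDecreasing α p then 1 else 0

open Classical in
/-- The color used for `P = {312, 2431}` : it is `1` iff the largest entry of `α` plays
the role of `3` in an occurrence of `231`; otherwise `0`. -/
noncomputable def colorD2 {n : ℕ} (α : Equiv.Perm (Fin n)) : ℕ :=
  if MaxIn231 α then 1 else 0

/-!
Moving the maximum of `α` one step right swaps two adjacent positions `j ⋖ j + 1`. An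
occurrence of a pattern `σ` in `α^→` that misses one of these two positions stays an
occurrence of `σ` in `α` once the swap is undone on its positions. An occurrence that uses
both must place the maximum of `σ` at `j + 1` and its left neighbour at `j`, and then the
same positions carry an occurrence of `σ^←` in `α`. So if every `τ^←` with `τ ∈ P`
contains a pattern of `P`, no `P`-avoider can gain a pattern of `P` by a right move.
Conversely, a `P`-avoiding `τ^←` would be a `P`-avoider whose right move `τ` lies in `P`.
-/

theorem Contains.refl {k : ℕ} (σ : Perm (Fin k)) : Contains σ σ :=
  ⟨id, strictMono_id, fun _ _ => Iff.rfl⟩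

theorem Contains.trans {k l n : ℕ} {ρ : Perm (Fin k)} {σ : Perm (Fin l)} {π : Perm (Fin n)}
    (hρσ : Contains ρ σ) (hσπ : Contains σ π) : Contains ρ π := by
  obtain ⟨f, hf, hfiso⟩ := hρσ
  obtain ⟨g, hg, hgiso⟩ := hσπ
  exact ⟨g ∘ f, hg.comp hf, fun a b => (hfiso a b).trans (hgiso _ _)⟩

theorem contains_of_length_zero {n : ℕ} (σ : Perm (Fin 0)) (π : Perm (Fin n)) :
    Contains σ π :=
  ⟨Fin.elim0, fun x => x.elim0, fun x => x.elim0⟩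

theorem CovBy.swap_lt_swap {α : Type*} [LinearOrder α] {i i' x y : α} (h : i ⋖ i')
    (hxy : x < y) (hne : ¬(x = i ∧ y = i')) : swap i i' x < swap i i' y := by
  rcases eq_or_ne x i with rfl | hxi
  · have hyi' : y ≠ i' := fun hy => hne ⟨rfl, hy⟩
    rw [swap_apply_left, swap_apply_of_ne_of_ne hxy.ne' hyi']
    exact lt_of_le_of_ne (h.ge_of_gt hxy) hyi'.symm
  rcases eq_or_ne x i' with rfl | hxi'
  · rw [swap_apply_right, swap_apply_of_ne_of_ne (h.lt.trans hxy).ne' hxy.ne']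
    exact h.lt.trans hxy
  rw [swap_apply_of_ne_of_ne hxi hxi']
  rcases eq_or_ne y i with rfl | hyi
  · rw [swap_apply_left]
    exact hxy.trans h.lt
  rcases eq_or_ne y i' with rfl | hyi'
  · rw [swap_apply_right]
    exact lt_of_le_of_ne (h.le_of_lt hxy) hxi
  · rwa [swap_apply_of_ne_of_ne hyi hyi']

theorem StrictMono.swap_comp_of_covBy {α β : Type*} [Preorder α] [LinearOrder β] {f : α → β}
    (hf : StrictMono f) {i i' : β} (h : i ⋖ i')
    (hrange : ¬(i ∈ Set.range f ∧ i' ∈ Set.range f)) :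
    StrictMono (swap i i' ∘ f) := fun _ _ hxy =>
  h.swap_lt_swap (hf hxy) fun ⟨hx, hy⟩ => hrange ⟨⟨_, hx⟩, ⟨_, hy⟩⟩

theorem order_iff_mul_swap {k n : ℕ} {σ : Perm (Fin k)} {π : Perm (Fin n)} {f : Fin k → Fin n}
    (hf : Function.Injective f) (hiso : ∀ a b, σ a < σ b ↔ π (f a) < π (f b))
    (a b x y : Fin k) :
    (σ * swap a b) x < (σ * swap a b) y ↔
      (π * swap (f a) (f b)) (f x) < (π * swap (f a) (f b)) (f y) := by
  simp only [Perm.mul_apply, ← hf.map_swap]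
  exact hiso _ _

theorem eq_last_of_order_iff {k n : ℕ} {σ : Perm (Fin (k + 1))} {π : Perm (Fin (n + 1))}
    {f : Fin (k + 1) → Fin (n + 1)} (hiso : ∀ a b, σ a < σ b ↔ π (f a) < π (f b))
    {a : Fin (k + 1)} (ha : π (f a) = Fin.last n) : σ a = Fin.last k := by
  by_contra hne
  obtain ⟨b, hb⟩ := σ.surjective (Fin.last k)
  have hlt : σ a < σ b := hb ▸ Fin.lt_last_iff_ne_last.2 hne
  exact ((hiso _ _).1 hlt).not_ge (ha ▸ Fin.le_last _)

theorem Fin.covBy_add_one_of_ne_last {n : ℕ} {j : Fin (n + 1)} (h : j ≠ Fin.last n) :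
    j ⋖ j + 1 := by
  rw [Fin.covBy_iff, Fin.val_add_one_of_lt (Fin.lt_last_iff_ne_last.2 h)]
  exact Order.covBy_add_one _

theorem CovBy.fin_add_one_eq {n : ℕ} {a b : Fin (n + 1)} (h : b ⋖ a) : b + 1 = a := by
  have hb : b < Fin.last n := h.lt.trans_le (Fin.le_last a)
  rw [Fin.covBy_iff, Order.covBy_iff_add_one_eq] at h
  exact Fin.ext (by rw [Fin.val_add_one_of_lt hb, h])

theorem maxPos_moveLeft {n : ℕ} (τ : Perm (Fin (n + 1))) :
    maxPos (moveLeft τ) = maxPos τ - 1 := by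
  rw [maxPos, moveLeft, mul_inv_rev, Perm.mul_apply, swap_inv]
  exact swap_apply_left _ _

theorem moveRight_moveLeft {n : ℕ} (τ : Perm (Fin (n + 1))) :
    moveRight (moveLeft τ) = τ := by
  rw [moveRight, maxPos_moveLeft, sub_add_cancel, moveLeft, mul_assoc,
    swap_comm (maxPos τ - 1), swap_mul_self, mul_one]

theorem maxPos_moveLeft_ne_last {n : ℕ} {τ : Perm (Fin (n + 1))} (hτ : maxPos τ ≠ 0) :
    maxPos (moveLeft τ) ≠ Fin.last n := by
  rw [maxPos_moveLeft, Ne, sub_eq_iff_eq_add, Fin.last_add_one]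
  exact hτ

theorem Contains.of_moveRight {n m : ℕ} {α : Perm (Fin (n + 1))} {σ : Perm (Fin (m + 1))}
    (hα : maxPos α ≠ Fin.last n) (h : Contains σ (moveRight α)) :
    Contains σ α ∨ maxPos σ ≠ 0 ∧ Contains (moveLeft σ) α := by
  obtain ⟨f, hf, hiso⟩ := h
  have hj : maxPos α ⋖ maxPos α + 1 := Fin.covBy_add_one_of_ne_last hα
  by_cases hboth : maxPos α ∈ Set.range f ∧ maxPos α + 1 ∈ Set.range f
  · obtain ⟨⟨b, hb⟩, ⟨a, ha⟩⟩ := hboth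
    have hba : b ⋖ a := CovBy.of_image (OrderEmbedding.ofStrictMono f hf)
      (by rw [OrderEmbedding.coe_ofStrictMono, ha, hb]; exact hj)
    have hσa : maxPos σ = a := by
      have hαa : moveRight α (f a) = Fin.last n := by
        rw [ha, moveRight, Perm.mul_apply, swap_apply_right]
        exact Perm.eq_inv_iff_eq.1 rfl
      exact Perm.inv_eq_iff_eq.2 (eq_last_of_order_iff hiso hαa).symm
    have hσb : maxPos σ - 1 = b := by rw [hσa, ← hba.fin_add_one_eq, add_sub_cancel_right]
    refine Or.inr ⟨hσa ▸ ne_zero_of_lt hba.lt, f, hf, ?_⟩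
    have hswap := order_iff_mul_swap hf.injective hiso a b
    rwa [ha, hb, moveRight, mul_assoc, swap_comm (maxPos α + 1), swap_mul_self, mul_one,
      ← hσa, ← hσb, ← moveLeft] at hswap
  · exact Or.inl ⟨_, hf.swap_comp_of_covBy hj hboth, hiso⟩

/-- A set `P` of (possibly different lengths) forbidden patterns is
right-justified if and only if, for every pattern `τ ∈ P` for which `τ^←` exists
(the largest entry of `τ` is not in the first position), `τ^←` contains some
pattern belonging to `P`. -/
theorem rightJustified_iff_moveLeft_contains (P : PatternSet) :
    RightJustified P ↔
      ∀ (m : ℕ) (τ : Equiv.Perm (Fin (m + 1))),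
        (⟨m + 1, τ⟩ : (k : ℕ) × Equiv.Perm (Fin k)) ∈ P → maxPos τ ≠ 0 →
          ∃ ρ ∈ P, Contains ρ.2 (moveLeft τ) := by
  constructor
  · intro hP m τ hτP hτ
    by_contra! havoid
    have hτavoid := hP m (moveLeft τ) havoid (maxPos_moveLeft_ne_last hτ) ⟨m + 1, τ⟩ hτP
    rw [moveRight_moveLeft] at hτavoid
    exact hτavoid (Contains.refl τ)
  · rintro hP n α hα hαlast ⟨_ | m, σ⟩ hσP hσ
    · exact hα _ hσP (contains_of_length_zero σ α)
    rcases Contains.of_moveRight hαlast hσ with hσα | ⟨hσ0, hσα⟩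
    · exact hα _ hσP hσα
    · obtain ⟨ρ, hρP, hρσ⟩ := hP m σ hσP hσ0
      exact hα ρ hρP (hρσ.trans hσα)
end

section
/- Let P be a set of forbidden patterns all of the same length. Then P is right-justified if and only if for each pattern τ in P for which τ^← exists (i.e., the largest entry of τ is not in the first position), the permutation τ^← also belongs to P. -/
open Equiv

/-!
Moving the maximum of `α` one step to the right swaps two adjacent entries and changes
nothing else. An occurrence of a pattern in `α^→` that uses at most one of the two swapped
positions slides onto the other one and becomes an occurrence of the same pattern in `α`.
An occurrence that uses both uses them as consecutive entries, the second carrying the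
maximum of the pattern `τ`, so it is an occurrence of `τ^←` in `α`. Conversely, when all
patterns have the same length, a permutation of that length avoids `P` unless it lies in `P`;
so if `τ ∈ P` but `τ^← ∉ P`, then `τ^←` avoids `P` while `(τ^←)^→ = τ` does not.
-/

open Function Set

theorem Equiv.Perm.eq_of_forall_lt_iff_lt {α : Type*} [LinearOrder α] [Finite α]
    {σ π : Perm α} (h : ∀ a b, σ a < σ b ↔ π a < π b) : σ = π := by
  have hmono : StrictMono (π ∘ σ.symm) := fun x y hxy => (h _ _).1 (by simpa using hxy)
  ext a
  simpa using (congrFun hmono.eq_id (σ a)).symm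

section Containment

variable {k m n : ℕ}

theorem contains_iff_eq {σ π : Perm (Fin k)} : Contains σ π ↔ σ = π := by
  refine ⟨fun ⟨f, hf, hσ⟩ => ?_, fun h => h ▸ ⟨id, strictMono_id, fun _ _ => Iff.rfl⟩⟩
  obtain rfl := hf.eq_id
  exact Perm.eq_of_forall_lt_iff_lt hσ

theorem contains_of_fin_zero (σ : Perm (Fin 0)) (π : Perm (Fin n)) : Contains σ π :=
  ⟨Fin.elim0, fun a => a.elim0, fun a => a.elim0⟩

theorem avoidsSet_of_not_mem {P : PatternSet} {π : Perm (Fin k)} (hP : ∀ τ ∈ P, τ.1 = k)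
    (hπ : ⟨k, π⟩ ∉ P) : AvoidsSet π P := by
  rintro ⟨l, τ⟩ hτ hc
  obtain rfl : l = k := hP _ hτ
  exact hπ (contains_iff_eq.1 hc ▸ hτ)

def IsOccurrence (σ : Perm (Fin k)) (π : Perm (Fin n)) (f : Fin k → Fin n) : Prop :=
  StrictMono f ∧ ∀ a b, σ a < σ b ↔ π (f a) < π (f b)

theorem IsOccurrence.mul_swap {σ : Perm (Fin k)} {π : Perm (Fin n)} {f : Fin k → Fin n}
    (hf : IsOccurrence σ π f) (a b : Fin k) :
    IsOccurrence (σ * swap a b) (π * swap (f a) (f b)) f := by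
  refine ⟨hf.1, fun x y => ?_⟩
  simp only [Perm.mul_apply, hf.1.injective.swap_apply]
  exact hf.2 _ _

theorem IsOccurrence.apply_eq_last {σ : Perm (Fin (m + 1))} {π : Perm (Fin (n + 1))}
    {f : Fin (m + 1) → Fin (n + 1)} (hf : IsOccurrence σ π f) {b : Fin (m + 1)}
    (hb : π (f b) = Fin.last n) : σ b = Fin.last m := by
  have hle : ∀ x, σ x ≤ σ b := fun x => not_lt.1 fun h =>
    (Fin.le_last (π (f x))).not_gt (hb ▸ (hf.2 b x).1 h)
  exact le_antisymm (Fin.le_last _) (by simpa using hle (σ.symm (Fin.last m)))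

theorem StrictMono.swap_castSucc_succ_comp {f : Fin k → Fin (n + 1)} (hf : StrictMono f)
    {i : Fin n} (hi : ¬ (i.castSucc ∈ range f ∧ i.succ ∈ range f)) :
    StrictMono (swap i.castSucc i.succ ∘ f) := by
  intro x y hxy
  have hlt := hf hxy
  simp only [mem_range, not_and_or, not_exists] at hi
  have hmiss := hi.imp (fun h => And.intro (h x) (h y)) (fun h => And.intro (h x) (h y))
  simp only [comp_apply, swap_apply_def]
  split_ifs <;> simp only [Fin.lt_def, Fin.ext_iff, Fin.val_castSucc, Fin.val_succ] at * <;> omega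

theorem StrictMono.exists_castSucc_succ_of_apply_eq {f : Fin (m + 1) → Fin (n + 1)}
    (hf : StrictMono f) {a b : Fin (m + 1)} {i : Fin n} (ha : f a = i.castSucc)
    (hb : f b = i.succ) : ∃ c : Fin m, a = c.castSucc ∧ b = c.succ := by
  have hab : a < b := hf.lt_iff_lt.1 (ha ▸ hb ▸ Fin.castSucc_lt_succ)
  obtain ⟨c, rfl⟩ := Fin.exists_succ_eq.2 (Fin.ne_zero_of_lt hab)
  refine ⟨c, le_antisymm (Fin.le_castSucc_iff.2 hab) (not_lt.1 fun h => ?_), rfl⟩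
  have h1 : i.castSucc < f c.castSucc := ha ▸ hf h
  have h2 : f c.castSucc < i.succ := hb ▸ hf Fin.castSucc_lt_succ
  exact (Fin.castSucc_lt_iff_succ_le.1 h1).not_gt h2

end Containment

section MoveMax

variable {n : ℕ} {α : Perm (Fin (n + 1))} {i : Fin n}

theorem maxPos_eq_iff {j : Fin (n + 1)} : maxPos α = j ↔ α j = Fin.last n :=
  Perm.inv_eq_iff_eq.trans eq_comm

theorem apply_maxPos : α (maxPos α) = Fin.last n :=
  maxPos_eq_iff.1 rfl

theorem moveRight_eq_mul_swap (h : maxPos α = i.castSucc) :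
    moveRight α = α * swap i.castSucc i.succ := by
  rw [moveRight, h, Fin.coeSucc_eq_succ]

theorem moveLeft_eq_mul_swap (h : maxPos α = i.succ) :
    moveLeft α = α * swap i.castSucc i.succ := by
  rw [moveLeft, h, ← Fin.coeSucc_eq_succ, add_sub_cancel_right, swap_comm]

theorem maxPos_moveLeft_s1 (h : maxPos α = i.succ) : maxPos (moveLeft α) = i.castSucc := by
  rw [maxPos_eq_iff, moveLeft_eq_mul_swap h, Perm.mul_apply, swap_apply_left, ← h, apply_maxPos]

theorem moveRight_moveLeft_s1 (h : maxPos α = i.succ) : moveRight (moveLeft α) = α := by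
  rw [moveRight_eq_mul_swap (maxPos_moveLeft_s1 h), moveLeft_eq_mul_swap h, mul_assoc,
    swap_mul_self, mul_one]

end MoveMax

theorem contains_or_contains_moveLeft_of_contains_moveRight {m n : ℕ}
    {α : Perm (Fin (n + 1))} {τ : Perm (Fin (m + 1))} (hα : maxPos α ≠ Fin.last n)
    (h : Contains τ (moveRight α)) :
    Contains τ α ∨ (maxPos τ ≠ 0 ∧ Contains (moveLeft τ) α) := by
  obtain ⟨i, hi⟩ := Fin.exists_castSucc_eq.2 hα
  obtain ⟨f, hf⟩ := h
  change IsOccurrence τ (moveRight α) f at hf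
  rw [moveRight_eq_mul_swap hi.symm] at hf
  by_cases hboth : i.castSucc ∈ range f ∧ i.succ ∈ range f
  · obtain ⟨⟨a, ha⟩, ⟨b, hb⟩⟩ := hboth
    obtain ⟨c, rfl, rfl⟩ := hf.1.exists_castSucc_succ_of_apply_eq ha hb
    have hτ : maxPos τ = c.succ := maxPos_eq_iff.2 <| hf.apply_eq_last <| by
      rw [hb, Perm.mul_apply, swap_apply_right, hi, apply_maxPos]
    refine Or.inr ⟨hτ ▸ Fin.succ_ne_zero c, f, ?_⟩
    have := hf.mul_swap c.castSucc c.succ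
    rwa [ha, hb, mul_assoc, swap_mul_self, mul_one, ← moveLeft_eq_mul_swap hτ] at this
  · exact Or.inl ⟨_, hf.1.swap_castSucc_succ_comp hboth, hf.2⟩

/-- A set `P` of forbidden patterns, all of the same length `L`, is
right-justified if and only if for each `τ ∈ P` for which `τ^←` exists (the largest
entry of `τ` is not in the first position), `τ^←` also belongs to `P`. -/
theorem rightJustified_iff_moveLeft_mem (P : PatternSet) (L : ℕ)
    (hL : ∀ τ ∈ P, τ.1 = L) :
    RightJustified P ↔
      ∀ (m : ℕ) (τ : Equiv.Perm (Fin (m + 1))),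
        (⟨m + 1, τ⟩ : (k : ℕ) × Equiv.Perm (Fin k)) ∈ P → maxPos τ ≠ 0 →
          (⟨m + 1, moveLeft τ⟩ : (k : ℕ) × Equiv.Perm (Fin k)) ∈ P := by
  constructor
  · intro hRJ m τ hτ h0
    obtain ⟨i, hi⟩ := Fin.exists_succ_eq.2 h0
    by_contra hnot
    have hP : ∀ σ ∈ P, σ.1 = m + 1 := fun σ hσ => (hL σ hσ).trans (hL _ hτ).symm
    have havoid := hRJ m _ (avoidsSet_of_not_mem hP hnot)
      (maxPos_moveLeft_s1 hi.symm ▸ Fin.castSucc_ne_last i)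
    rw [moveRight_moveLeft_s1 hi.symm] at havoid
    exact havoid _ hτ (contains_iff_eq.2 rfl)
  · rintro hML n α hα hmax ⟨_ | m, τ⟩ hτ hc
    · exact hα _ hτ (contains_of_fin_zero τ α)
    · rcases contains_or_contains_moveLeft_of_contains_moveRight hmax hc with h | ⟨h0, h⟩
      exacts [hα _ hτ h, hα _ (hML m τ hτ h0) h]
end

section
/- Let P be a right-justified set of forbidden patterns, let α∈S_n(P), and let i with 2≤i≤n+1 be an active site of α. Then every site j with 1≤j<i is also an active site of α; consequently the active sites of any permutation in S(P) form an (possibly empty) interval of integers {1,2,...,k}. -/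
open Equiv

/-!
Moving the maximum of `α^{↓i}` one step to the right gives `α^{↓(i-1)}`. Right-justification
therefore carries activity of site `i` down to site `i - 1`, hence to every lower site, and the
active sites form the initial segment `{1, …, k}` with `k` the largest active site.
-/

theorem Fin.cycleRange_succ_mul_swap {n : ℕ} (j : Fin n) :
    Fin.cycleRange j.succ * Equiv.swap j.castSucc j.succ = Fin.cycleRange j.castSucc := by
  ext x
  simp only [Equiv.Perm.mul_apply]
  rcases lt_trichotomy x j.castSucc with h | rfl | h
  · have h' : x < j.succ := h.trans Fin.castSucc_lt_succ
    rw [Equiv.swap_apply_of_ne_of_ne h.ne h'.ne, Fin.cycleRange_of_lt h', Fin.cycleRange_of_lt h]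
  · rw [Equiv.swap_apply_left, Fin.cycleRange_self, Fin.cycleRange_self]
  · rcases (Fin.castSucc_lt_iff_succ_le.1 h).eq_or_lt with rfl | h'
    · rw [Equiv.swap_apply_right, Fin.cycleRange_of_gt h,
        Fin.cycleRange_of_lt Fin.castSucc_lt_succ, Fin.coeSucc_eq_succ]
    · rw [Equiv.swap_apply_of_ne_of_ne h.ne' h'.ne', Fin.cycleRange_of_gt h',
        Fin.cycleRange_of_gt h]

theorem Fin.revPerm_mul_swap {n : ℕ} (a b : Fin n) :
    Fin.revPerm * Equiv.swap a b = Equiv.swap a.rev b.rev * Fin.revPerm :=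
  Equiv.mul_swap_eq_swap_mul _ _ _

section InsertMax

variable {n : ℕ} (α : Equiv.Perm (Fin n))

theorem insertMax_eq_of_val_eq {i : ℕ} (j : Fin (n + 1)) (hj : (j : ℕ) = i - 1) :
    insertMax α i = finSuccEquivLast.permCongr.symm α.optionCongr *
      (Fin.revPerm * Fin.cycleRange j * Fin.revPerm) := by
  have : Fin.rev ⟨n - (i - 1), by omega⟩ = j := by ext; simp only [Fin.val_rev]; omega
  rw [← this]
  rfl

theorem maxPos_insertMax (i : ℕ) :
    maxPos (insertMax α i) = ⟨n - (i - 1), by omega⟩ := by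
  rw [maxPos, Equiv.Perm.inv_eq_iff_eq]
  simp [insertMax]

/-- The insertion at site `i` permutes positions by `cycleRange (i - 1)` conjugated by `rev`,
so this is `Fin.cycleRange_succ_mul_swap`. -/
theorem moveRight_insertMax {i : ℕ} (hi : 2 ≤ i) (hin : i ≤ n + 1) :
    moveRight (insertMax α i) = insertMax α (i - 1) := by
  set k : Fin n := ⟨i - 2, by omega⟩
  have hpos : maxPos (insertMax α i) = k.succ.rev := by
    rw [maxPos_insertMax]; ext; simp only [Fin.val_rev, Fin.succ_mk, k]; omega
  have hpos_succ : k.succ.rev + 1 = k.castSucc.rev := by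
    rw [Fin.rev_succ, Fin.rev_castSucc, Fin.coeSucc_eq_succ]
  rw [moveRight, hpos, hpos_succ,
    insertMax_eq_of_val_eq α k.succ (by simp only [Fin.val_succ, k]; omega),
    insertMax_eq_of_val_eq α k.castSucc (by simp only [Fin.val_castSucc, k]; omega),
    mul_assoc, mul_assoc, mul_assoc, Fin.revPerm_mul_swap, Fin.rev_rev, Fin.rev_rev,
    Equiv.swap_comm, ← mul_assoc (Fin.cycleRange _), Fin.cycleRange_succ_mul_swap, mul_assoc]

end InsertMax

namespace RightJustified

variable {P : PatternSet} (hP : RightJustified P) {n : ℕ} {α : Equiv.Perm (Fin n)}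
include hP

theorem avoidsSet_insertMax_pred {i : ℕ} (hi : 2 ≤ i) (hin : i ≤ n + 1)
    (h : AvoidsSet (insertMax α i) P) : AvoidsSet (insertMax α (i - 1)) P := by
  rw [← moveRight_insertMax α hi hin]
  refine hP n _ h ?_
  rw [maxPos_insertMax, Ne, Fin.ext_iff, Fin.val_last]
  dsimp only
  omega

theorem avoidsSet_insertMax_of_le {i j : ℕ} (hj : 1 ≤ j) (hji : j ≤ i) (hin : i ≤ n + 1)
    (h : AvoidsSet (insertMax α i) P) : AvoidsSet (insertMax α j) P := by
  induction i, hji using Nat.le_induction with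
  | base => exact h
  | succ i hji ih =>
    exact ih (by omega) (hP.avoidsSet_insertMax_pred (i := i + 1) (by omega) hin h)

end RightJustified

theorem activeSites_interval_general (P : PatternSet) (hP : RightJustified P) {n : ℕ}
    (α : Equiv.Perm (Fin n)) :
    (∀ i : ℕ, 2 ≤ i → i ≤ n + 1 → AvoidsSet (insertMax α i) P →
      ∀ j : ℕ, 1 ≤ j → j < i → AvoidsSet (insertMax α j) P) ∧
    ∃ k : ℕ, ∀ j : ℕ, ActiveSite P α j ↔ 1 ≤ j ∧ j ≤ k := by
  classical
  refine ⟨fun i _ hin h j hj hji => hP.avoidsSet_insertMax_of_le hj hji.le hin h,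
    Nat.findGreatest (ActiveSite P α) (n + 1), fun j => ⟨fun hact => ?_, ?_⟩⟩
  · exact ⟨hact.1, Nat.le_findGreatest hact.2.1 hact⟩
  · rintro ⟨hj, hjk⟩
    obtain ⟨-, hkn, hk⟩ : ActiveSite P α (Nat.findGreatest (ActiveSite P α) (n + 1)) :=
      Nat.findGreatest_of_ne_zero rfl (by omega)
    exact ⟨hj, hjk.trans hkn, hP.avoidsSet_insertMax_of_le hj hjk hkn hk⟩

/-- For a right-justified set of forbidden patterns `P` and
`α ∈ S_n(P)`: if site `i` (with `2 ≤ i ≤ n+1`) of `α` is active then so is every site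
`j` with `1 ≤ j < i`; consequently, the active sites of `α` form a (possibly empty)
interval `{1, 2, …, k}`. -/
theorem activeSites_interval (P : PatternSet) (hP : RightJustified P) {n : ℕ}
    (α : Equiv.Perm (Fin n)) (hα : AvoidsSet α P) :
    (∀ i : ℕ, 2 ≤ i → i ≤ n + 1 → AvoidsSet (insertMax α i) P →
      ∀ j : ℕ, 1 ≤ j → j < i → AvoidsSet (insertMax α j) P) ∧
    ∃ k : ℕ, ∀ j : ℕ, ActiveSite P α j ↔ 1 ≤ j ∧ j ≤ k :=
  activeSites_interval_general P hP α
end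

section
/- Let p,m≥2 and let P={321, σ_p, σ_m}, where σ_p is the length-(p+1) permutation p (p+1) 1 2 ... (p−1) and σ_m is the length-(m+1) permutation (m+1) 1 2 ... m. If α∈S_n(P) and site k of α is active for some k≥2 (i.e., α^{↓k}∈S_{n+1}(P)), then the last k−1 entries of α are increasing, i.e., α(n−k+2)<α(n−k+3)<...<α(n), and moreover k≤m. -/
open Equiv

/-!
In `insertMax α k` the new maximum sits at position `n - (k - 1)`, directly before the
last `k - 1` entries of `α`. A descent among those entries would form a `321` with the
maximum, so they increase; and if `k > m`, the maximum followed by `m` of them is an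
occurrence of `(m+1) 1 2 … m`.
-/

section InsertMax

variable {n : ℕ} (α : Equiv.Perm (Fin n)) (k : ℕ)

def sitePos : Fin (n + 1) := ⟨n - (k - 1), by omega⟩

lemma insertMax_apply_sitePos : insertMax α k (sitePos k) = Fin.last n := by
  simp [insertMax, sitePos, Equiv.permCongr, Equiv.optionCongr]

lemma insertMax_apply_succ (b : Fin n) (hb : n - (k - 1) ≤ b) :
    insertMax α k b.succ = (α b).castSucc := by
  have hlt : b.succ.rev < (sitePos k : Fin (n + 1)).rev := by
    rw [Fin.rev_lt_rev, Fin.lt_def]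
    simp only [sitePos, Fin.val_succ]
    omega
  have hrev : (b.succ.rev + 1).rev = b.castSucc := by
    rw [Fin.rev_succ, Fin.coeSucc_eq_succ, Fin.rev_succ, Fin.rev_rev]
  simp only [insertMax, Perm.mul_apply, Fin.revPerm_apply]
  rw [show (⟨n - (k - 1), _⟩ : Fin (n + 1)) = sitePos k from rfl, Fin.cycleRange_of_lt hlt, hrev]
  simp [Equiv.permCongr, Equiv.optionCongr]

end InsertMax

lemma contains_perm321 {N : ℕ} (π : Perm (Fin N)) {x y z : Fin N} (hxy : x < y) (hyz : y < z)
    (hyx : π y < π x) (hzy : π z < π y) : Contains perm321 π := by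
  refine ⟨![x, y, z], Fin.strictMono_iff_lt_succ.2 ?_, fun a b => ?_⟩
  · simp [Fin.forall_fin_two, hxy, hyz]
  · have hanti : StrictAnti (π ∘ ![x, y, z]) :=
      Fin.strictAnti_iff_succ_lt.2 (by simp [Fin.forall_fin_two, hyx, hzy])
    rw [← Function.comp_apply (f := π), ← Function.comp_apply (f := π), hanti.lt_iff_gt]
    revert a b
    decide

lemma sigmaM_zero (m : ℕ) : sigmaM m 0 = Fin.last m := by
  rw [sigmaM, Perm.inv_def, Equiv.symm_apply_eq, finRotate_last]

lemma sigmaM_succ {m : ℕ} (i : Fin m) : sigmaM m i.succ = i.castSucc := by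
  rw [sigmaM, Perm.inv_def, Equiv.symm_apply_eq, finRotate_apply, Fin.coeSucc_eq_succ]

lemma contains_sigmaM {N m : ℕ} (π : Perm (Fin N)) (f : Fin (m + 1) → Fin N) (hf : StrictMono f)
    (hmax : ∀ i : Fin m, π (f i.succ) < π (f 0))
    (hinc : StrictMono fun i : Fin m => π (f i.succ)) :
    Contains (sigmaM m) π := by
  refine ⟨f, hf, fun a b => ?_⟩
  cases a using Fin.cases <;> cases b using Fin.cases
  · simp
  · rw [sigmaM_zero, sigmaM_succ]
    exact iff_of_false (not_lt.2 (Fin.le_last _)) (not_lt.2 (hmax _).le)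
  · rw [sigmaM_zero, sigmaM_succ]
    exact iff_of_true (Fin.castSucc_lt_last _) (hmax _)
  · rw [sigmaM_succ, sigmaM_succ, Fin.castSucc_lt_castSucc_iff]
    exact hinc.lt_iff_lt.symm

section Active

variable {n : ℕ} {α : Equiv.Perm (Fin n)} {k : ℕ}

lemma suffix_lt_of_not_contains_perm321 (h : ¬ Contains perm321 (insertMax α k))
    (a b : Fin n) (ha : n - (k - 1) ≤ a) (hab : a < b) : α a < α b := by
  refine (le_of_not_gt fun hba => h ?_).lt_of_ne (α.injective.ne hab.ne)
  refine contains_perm321 _ (x := sitePos k) (y := a.succ) (z := b.succ)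
    (by simp only [Fin.lt_def, sitePos, Fin.val_succ]; omega) (Fin.succ_lt_succ_iff.2 hab) ?_ ?_
  · rw [insertMax_apply_succ α k a ha, insertMax_apply_sitePos]
    exact Fin.castSucc_lt_last _
  · rw [insertMax_apply_succ α k a ha, insertMax_apply_succ α k b (ha.trans hab.le),
      Fin.castSucc_lt_castSucc_iff]
    exact hba

lemma le_of_not_contains_sigmaM {m : ℕ} (hkn : k ≤ n + 1)
    (h321 : ¬ Contains perm321 (insertMax α k)) (hσ : ¬ Contains (sigmaM m) (insertMax α k)) :
    k ≤ m := by
  by_contra! hmk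
  let g : Fin m → Fin n := fun i => ⟨n - (k - 1) + i, by omega⟩
  let f : Fin (m + 1) → Fin (n + 1) := fun i => ⟨n - (k - 1) + i, by omega⟩
  have hf0 : f 0 = sitePos k := rfl
  have hf_succ (i : Fin m) : f i.succ = (g i).succ := Fin.ext (by simp [f, g]; omega)
  have hg (i : Fin m) : n - (k - 1) ≤ g i := Nat.le_add_right _ _
  refine hσ (contains_sigmaM _ f (fun i j hij => by simpa [f] using hij) (fun i => ?_) ?_)
  · rw [hf_succ, hf0, insertMax_apply_succ α k _ (hg i), insertMax_apply_sitePos]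
    exact Fin.castSucc_lt_last _
  · intro i j hij
    simp only [hf_succ, insertMax_apply_succ α k _ (hg _), Fin.castSucc_lt_castSucc_iff]
    exact suffix_lt_of_not_contains_perm321 h321 _ _ (hg i) (by simpa [g] using hij)

end Active

theorem suffix_increasing_of_active_general (p m : ℕ) (P : PatternSet)
    (hP : P = {⟨3, perm321⟩, ⟨p + 1, sigmaP p⟩, ⟨m + 1, sigmaM m⟩})
    {n : ℕ} (α : Equiv.Perm (Fin n))
    (k : ℕ) (hkn : k ≤ n + 1)
    (hact : AvoidsSet (insertMax α k) P) :
    (∀ a b : Fin n, n - (k - 1) ≤ (a : ℕ) → a < b → α a < α b) ∧ k ≤ m := by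
  subst hP
  have h321 : ¬ Contains perm321 (insertMax α k) := hact ⟨3, perm321⟩ (by simp)
  have hσ : ¬ Contains (sigmaM m) (insertMax α k) := hact ⟨m + 1, sigmaM m⟩ (by simp)
  exact ⟨suffix_lt_of_not_contains_perm321 h321, le_of_not_contains_sigmaM hkn h321 hσ⟩

/-- For `p, m ≥ 2` and `P = {321, p(p+1)12…(p-1), (m+1)12…m}` : if
`α ∈ S_n(P)` and site `k` of `α` is active for some `k ≥ 2`, then the last `k − 1`
entries of `α` are increasing, and moreover `k ≤ m`. -/
theorem suffix_increasing_of_active (p m : ℕ) (hp : 2 ≤ p) (hm : 2 ≤ m) (P : PatternSet)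
    (hP : P = {⟨3, perm321⟩, ⟨p + 1, sigmaP p⟩, ⟨m + 1, sigmaM m⟩})
    {n : ℕ} (α : Equiv.Perm (Fin n)) (hα : AvoidsSet α P)
    (k : ℕ) (hk2 : 2 ≤ k) (hkn : k ≤ n + 1)
    (hact : AvoidsSet (insertMax α k) P) :
    (∀ a b : Fin n, n - (k - 1) ≤ (a : ℕ) → a < b → α a < α b) ∧ k ≤ m :=
  suffix_increasing_of_active_general p m P hP α k hkn hact
end

section
/- Let p≥2 and P={312, 2431, δ} where δ is the length-(p+1) decreasing permutation (p+1)p...21. For α∈S_n(P), define d(α)=1 if the entry n plays the role of the largest value in an occurrence of the pattern 231 in α AND the last p entries of α are not in decreasing order; otherwise d(α)=0 (in particular d of the empty permutation is 0). Then for every α∈S_n(P), site 1 of α is active; and if α∈S_n(P) has exactly k active sites and 1≤i≤k, then: (a) the number of active sites of α^{↓i} equals i+1 if i=1 or (i=k and d(α)=0 and k<p), and equals i otherwise; (b) d(α^{↓i})=0 if i=1 or (i=k and d(α)=0), and d(α^{↓i})=1 otherwise. Hence P is a colored regular set of forbidden patterns with color function d and set of colors {0,1}. -/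
open Equiv

/-!
Inserting the new maximum at site `i` of `α ∈ S_n(P)` can only create an occurrence that uses
it, so site `i` is active iff the last `i - 1` entries of `α` decrease (no `312`), `i ≤ p`
(no `δ`), and no `231` has its `2` before the site and its `3` and `1` after it (no `2431`).
These conditions are antitone in `i`, so the active sites are `1, …, k`.

In `β = α^{↓i}` the new maximum heads a decreasing suffix, so sites `1, …, i` of `β` are active,
site `i + 2` is not, and site `i + 1` is active iff `i < p` and every entry of `α` before site `i`
is smaller than every entry after it; the same condition says that the maximum of `β` is not the
`3` of a `231`. For `i = k < p` and `d(α) = 0` the condition holds: otherwise site `k + 1` of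
`α` would be active, unless the entry just left of site `k` were the `3` of a `231` and (by
`312`- and `2431`-avoidance) the maximum of `α`, which `d(α) = 0` rules out since that entry
and its left neighbour lie among the last `p` entries.
-/

abbrev deltaPatterns (p : ℕ) : PatternSet :=
  {⟨3, perm312⟩, ⟨4, perm2431⟩, ⟨p + 1, (Fin.revPerm : Equiv.Perm (Fin (p + 1)))⟩}

section Patterns

variable {m : ℕ} (β : Equiv.Perm (Fin m))

theorem contains_perm312_iff :
    Contains perm312 β ↔ ∃ x y z : Fin m, x < y ∧ y < z ∧ β y < β z ∧ β z < β x := by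
  constructor
  · rintro ⟨f, hf, hiff⟩
    exact ⟨f 0, f 1, f 2, hf (by decide), hf (by decide),
      (hiff 1 2).1 (by decide), (hiff 2 0).1 (by decide)⟩
  · rintro ⟨x, y, z, hxy, hyz, h1, h2⟩
    refine ⟨![x, y, z], ?_, fun a b => ?_⟩
    · exact Fin.strictMono_iff_lt_succ.2 fun i => by fin_cases i <;> assumption
    · fin_cases a <;> fin_cases b <;> simp <;>
        first
        | exact iff_of_true (by decide) (by omega)
        | exact iff_of_false (by decide) (by omega)

theorem contains_perm2431_iff :
    Contains perm2431 β ↔ ∃ x y z w : Fin m, x < y ∧ y < z ∧ z < w ∧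
      β w < β x ∧ β x < β z ∧ β z < β y := by
  constructor
  · rintro ⟨f, hf, hiff⟩
    exact ⟨f 0, f 1, f 2, f 3, hf (by decide), hf (by decide), hf (by decide),
      (hiff 3 0).1 (by decide), (hiff 0 2).1 (by decide), (hiff 2 1).1 (by decide)⟩
  · rintro ⟨x, y, z, w, hxy, hyz, hzw, h1, h2, h3⟩
    refine ⟨![x, y, z, w], ?_, fun a b => ?_⟩
    · exact Fin.strictMono_iff_lt_succ.2 fun i => by fin_cases i <;> assumption
    · fin_cases a <;> fin_cases b <;> simp <;>
        first
        | exact iff_of_true (by decide) (by omega)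
        | exact iff_of_false (by decide) (by omega)

theorem contains_revPerm_iff {q : ℕ} :
    Contains (Fin.revPerm : Equiv.Perm (Fin q)) β ↔
      ∃ f : Fin q → Fin m, StrictMono f ∧ StrictAnti (β ∘ f) := by
  refine exists_congr fun f => and_congr_right fun hf => ?_
  simp only [Fin.revPerm_apply, Fin.rev_lt_rev]
  exact ⟨fun h a b hab => (h b a).1 hab, fun h a b => (StrictAnti.lt_iff_gt h).symm⟩

theorem avoidsSet_deltaPatterns_iff (p : ℕ) :
    AvoidsSet β (deltaPatterns p) ↔ ¬ Contains perm312 β ∧ ¬ Contains perm2431 β ∧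
      ¬ Contains (Fin.revPerm : Equiv.Perm (Fin (p + 1))) β := by
  simp [AvoidsSet, deltaPatterns]

end Patterns

def insertPos (n i : ℕ) : Fin (n + 1) := ⟨n - (i - 1), by omega⟩

theorem val_insertPos {n i : ℕ} (hi : 1 ≤ i) : (insertPos n i : ℕ) = n + 1 - i := by
  simp only [insertPos]; omega

section InsertMax

variable {n : ℕ} (α : Equiv.Perm (Fin n)) (i : ℕ)

theorem insertMax_insertPos : insertMax α i (insertPos n i) = Fin.last n := by
  simp [insertMax, insertPos, Equiv.permCongr_apply]

theorem insertMax_succAbove (a : Fin n) :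
    insertMax α i ((insertPos n i).succAbove a) = (α a).castSucc := by
  simp [insertMax, insertPos, Equiv.permCongr_apply, Fin.rev_succAbove, Fin.cycleRange_succAbove,
    Fin.rev_succ]

end InsertMax

section Conditions

variable {n : ℕ} (α : Equiv.Perm (Fin n)) (t : ℕ)

def SuffixDecreasing : Prop := ∀ a b : Fin n, t ≤ (a : ℕ) → a < b → α b < α a

def PrefixBelow : Prop := ∀ x s : Fin n, (x : ℕ) < t → t ≤ (s : ℕ) → α x < α s

/-- An occurrence of `231` whose `2` lies before position `t` and whose `3` and `1` do not. -/
def Straddles231 : Prop :=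
  ∃ x y z : Fin n, (x : ℕ) < t ∧ t ≤ (y : ℕ) ∧ y < z ∧ α z < α x ∧ α x < α y

variable {α t}

theorem SuffixDecreasing.mono {t' : ℕ} (h : SuffixDecreasing α t) (ht : t ≤ t') :
    SuffixDecreasing α t' :=
  fun a b ha => h a b (ht.trans ha)

theorem not_straddles231_of_le {t' : ℕ} (hdec : SuffixDecreasing α t)
    (h : ¬ Straddles231 α t) (ht : t ≤ t') : ¬ Straddles231 α t' := by
  rintro ⟨x, y, z, hx, hy, hyz, hzx, hxy⟩
  by_cases hxt : (x : ℕ) < t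
  · exact h ⟨x, y, z, hxt, ht.trans hy, hyz, hzx, hxy⟩
  · exact (hdec x y (by omega) (by rw [Fin.lt_def]; omega)).asymm hxy

end Conditions

/-- Site `i` leaves the entries of `α` from position `n + 1 - i` on, the last `i - 1`,
to the right of the new maximum. -/
def ActiveCond {n : ℕ} (p : ℕ) (α : Equiv.Perm (Fin n)) (i : ℕ) : Prop :=
  SuffixDecreasing α (n + 1 - i) ∧ i ≤ p ∧ ¬ Straddles231 α (n + 1 - i)

theorem antitone_activeCond {n : ℕ} (p : ℕ) (α : Equiv.Perm (Fin n)) :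
    Antitone (ActiveCond p α) :=
  fun _ _ hij ⟨hdec, hp, hs⟩ =>
    ⟨hdec.mono (by omega), hij.trans hp, not_straddles231_of_le hdec hs (by omega)⟩

section InsertMaxPatterns

variable {n : ℕ} {α : Equiv.Perm (Fin n)} {i : ℕ}

theorem insertMax_le_insertPos (j : Fin (n + 1)) :
    insertMax α i j ≤ insertMax α i (insertPos n i) := by
  rw [insertMax_insertPos]; exact Fin.le_last _

theorem exists_succAbove_insertPos_of_lt {x y : Fin (n + 1)}
    (h : insertMax α i x < insertMax α i y) : ∃ a, (insertPos n i).succAbove a = x :=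
  Fin.exists_succAbove_eq fun hx => (h.trans_le (insertMax_le_insertPos y)).ne (by rw [hx])

theorem insertPos_lt_succAbove_iff (hi : 1 ≤ i) (a : Fin n) :
    insertPos n i < (insertPos n i).succAbove a ↔ n + 1 - i ≤ (a : ℕ) := by
  rw [Fin.lt_succAbove_iff_le_castSucc, Fin.le_def, val_insertPos hi, Fin.val_castSucc]

theorem succAbove_lt_insertPos_iff (hi : 1 ≤ i) (a : Fin n) :
    (insertPos n i).succAbove a < insertPos n i ↔ (a : ℕ) < n + 1 - i := by
  rw [Fin.succAbove_lt_iff_castSucc_lt, Fin.lt_def, val_insertPos hi, Fin.val_castSucc]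

theorem Contains.insertMax {k : ℕ} {σ : Equiv.Perm (Fin k)} (h : Contains σ α) (i : ℕ) :
    Contains σ (insertMax α i) := by
  obtain ⟨f, hf, hσ⟩ := h
  refine ⟨(insertPos n i).succAbove ∘ f, (Fin.strictMono_succAbove _).comp hf, fun a b => ?_⟩
  simp [insertMax_succAbove, hσ]

theorem contains_of_insertMax {k : ℕ} {σ : Equiv.Perm (Fin k)} {f : Fin k → Fin (n + 1)}
    (hf : StrictMono f) (hσ : ∀ a b, σ a < σ b ↔ insertMax α i (f a) < insertMax α i (f b))
    (hm : ∀ a, f a ≠ insertPos n i) : Contains σ α := by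
  choose g hg using fun a => Fin.exists_succAbove_eq (hm a)
  refine ⟨g, fun a b hab => ?_, fun a b => ?_⟩
  · rw [← Fin.succAbove_lt_succAbove_iff (p := insertPos n i), hg, hg]; exact hf hab
  · simpa [← hg, insertMax_succAbove] using hσ a b

variable (α)

theorem contains_perm312_insertMax_iff (hi : 1 ≤ i) :
    Contains perm312 (insertMax α i) ↔
      Contains perm312 α ∨ ¬ SuffixDecreasing α (n + 1 - i) := by
  constructor
  · rw [contains_perm312_iff]
    rintro ⟨x, y, z, hxy, hyz, hyz', hzx⟩
    obtain ⟨b, rfl⟩ := exists_succAbove_insertPos_of_lt hyz'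
    obtain ⟨c, rfl⟩ := exists_succAbove_insertPos_of_lt hzx
    simp only [Fin.succAbove_lt_succAbove_iff, insertMax_succAbove,
      Fin.castSucc_lt_castSucc_iff] at hyz hyz'
    by_cases hx : x = insertPos n i
    · subst hx
      exact Or.inr fun hdec =>
        (hdec b c ((insertPos_lt_succAbove_iff hi b).1 hxy) hyz).asymm hyz'
    · obtain ⟨a, rfl⟩ := Fin.exists_succAbove_eq hx
      simp only [Fin.succAbove_lt_succAbove_iff, insertMax_succAbove,
        Fin.castSucc_lt_castSucc_iff] at hxy hzx
      exact Or.inl ((contains_perm312_iff α).2 ⟨a, b, c, hxy, hyz, hyz', hzx⟩)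
  · rintro (h | h)
    · exact h.insertMax i
    · simp only [SuffixDecreasing, not_forall, not_lt] at h
      obtain ⟨a, b, ha, hab, hba⟩ := h
      refine (contains_perm312_iff _).2 ⟨insertPos n i, (insertPos n i).succAbove a,
        (insertPos n i).succAbove b, (insertPos_lt_succAbove_iff hi a).2 ha,
        Fin.succAbove_lt_succAbove_iff.2 hab, ?_, ?_⟩
      · simpa [insertMax_succAbove] using hba.lt_of_ne (α.injective.ne hab.ne)
      · simp [insertMax_insertPos, insertMax_succAbove]

theorem contains_perm2431_insertMax_iff (hi : 1 ≤ i) :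
    Contains perm2431 (insertMax α i) ↔
      Contains perm2431 α ∨ Straddles231 α (n + 1 - i) := by
  constructor
  · rw [contains_perm2431_iff]
    rintro ⟨x, y, z, w, hxy, hyz, hzw, hwx, hxz, hzy⟩
    obtain ⟨a, rfl⟩ := exists_succAbove_insertPos_of_lt hxz
    obtain ⟨c, rfl⟩ := exists_succAbove_insertPos_of_lt hzy
    obtain ⟨d, rfl⟩ := exists_succAbove_insertPos_of_lt hwx
    simp only [Fin.succAbove_lt_succAbove_iff, insertMax_succAbove,
      Fin.castSucc_lt_castSucc_iff] at hzw hwx hxz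
    by_cases hy : y = insertPos n i
    · subst hy
      exact Or.inr ⟨a, c, d, (succAbove_lt_insertPos_iff hi a).1 hxy,
        (insertPos_lt_succAbove_iff hi c).1 hyz, hzw, hwx, hxz⟩
    · obtain ⟨b, rfl⟩ := Fin.exists_succAbove_eq hy
      simp only [Fin.succAbove_lt_succAbove_iff, insertMax_succAbove,
        Fin.castSucc_lt_castSucc_iff] at hxy hyz hzy
      exact Or.inl ((contains_perm2431_iff α).2 ⟨a, b, c, d, hxy, hyz, hzw, hwx, hxz, hzy⟩)
  · rintro (h | ⟨x, y, z, hx, hy, hyz, hzx, hxy⟩)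
    · exact h.insertMax i
    · refine (contains_perm2431_iff _).2 ⟨(insertPos n i).succAbove x, insertPos n i,
        (insertPos n i).succAbove y, (insertPos n i).succAbove z,
        (succAbove_lt_insertPos_iff hi x).2 hx, (insertPos_lt_succAbove_iff hi y).2 hy,
        Fin.succAbove_lt_succAbove_iff.2 hyz, ?_, ?_, ?_⟩
      · simpa [insertMax_succAbove] using hzx
      · simpa [insertMax_succAbove] using hxy
      · simp [insertMax_insertPos, insertMax_succAbove]

end InsertMaxPatterns

section Decreasing

theorem StrictMono.val_zero_add_le {q N : ℕ} {f : Fin (q + 1) → Fin N} (hf : StrictMono f)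
    (k : Fin (q + 1)) : (f 0 : ℕ) + k ≤ f k := by
  induction k using Fin.induction with
  | zero => simp
  | succ k ih =>
    have := Fin.lt_def.1 (hf (Fin.castSucc_lt_succ (i := k)))
    simp only [Fin.val_castSucc, Fin.val_succ] at ih this ⊢
    omega

theorem contains_revPerm_of_suffixDecreasing {m t q : ℕ} {β : Equiv.Perm (Fin m)}
    (h : SuffixDecreasing β t) (hq : t + q ≤ m) :
    Contains (Fin.revPerm : Equiv.Perm (Fin q)) β := by
  refine (contains_revPerm_iff β).2 ⟨fun k => ⟨t + k, by omega⟩, fun a b hab => ?_,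
    fun a b hab => h _ _ (Nat.le_add_right _ _) ?_⟩ <;>
    exact Fin.mk_lt_mk.2 (Nat.add_lt_add_left hab t)

variable {n : ℕ} {α : Equiv.Perm (Fin n)} {i : ℕ}

theorem SuffixDecreasing.insertMax (hi : 1 ≤ i) (h : SuffixDecreasing α (n + 1 - i)) :
    SuffixDecreasing (insertMax α i) (n + 1 - i) := by
  intro x y hx hxy
  have hmx : insertPos n i ≤ x := by rw [Fin.le_def, val_insertPos hi]; exact hx
  obtain ⟨b, rfl⟩ := Fin.exists_succAbove_eq (hmx.trans_lt hxy).ne'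
  rcases hmx.eq_or_lt with rfl | hmx
  · rw [insertMax_insertPos, insertMax_succAbove]; exact Fin.castSucc_lt_last _
  · obtain ⟨a, rfl⟩ := Fin.exists_succAbove_eq hmx.ne'
    rw [insertMax_succAbove, insertMax_succAbove, Fin.castSucc_lt_castSucc_iff]
    exact h a b ((insertPos_lt_succAbove_iff hi a).1 hmx) (Fin.succAbove_lt_succAbove_iff.1 hxy)

theorem contains_revPerm_of_insertMax {p : ℕ} (hi : 1 ≤ i) (hip : i ≤ p)
    (h : Contains (Fin.revPerm : Equiv.Perm (Fin (p + 1))) (insertMax α i)) :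
    Contains (Fin.revPerm : Equiv.Perm (Fin (p + 1))) α := by
  obtain ⟨f, hf, hσ⟩ := h
  refine contains_of_insertMax hf hσ fun a ha => ?_
  have hf0 : f 0 = insertPos n i := by
    rcases (Fin.zero_le a).eq_or_lt with rfl | ha0
    · exact ha
    · have := (hσ a 0).1 (Fin.rev_lt_rev.2 ha0)
      exact absurd (ha ▸ insertMax_le_insertPos (f 0)) this.not_ge
  have hlast := hf.val_zero_add_le (Fin.last p)
  rw [hf0, val_insertPos hi, Fin.val_last] at hlast
  have := (f (Fin.last p)).isLt
  omega

end Decreasing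

theorem Nat.findGreatest_eq_iff_of_antitone {P : ℕ → Prop} [DecidablePred P] (hP : Antitone P)
    (h0 : P 0) {N k : ℕ} : Nat.findGreatest P N = k ↔ k ≤ N ∧ P k ∧ (k = N ∨ ¬ P (k + 1)) := by
  rw [Nat.findGreatest_eq_iff]
  constructor
  · rintro ⟨hkN, hk, hgt⟩
    refine ⟨hkN, ?_, ?_⟩
    · rcases k with _ | k
      exacts [h0, hk k.succ_ne_zero]
    · rcases hkN.eq_or_lt with h | h
      exacts [Or.inl h, Or.inr (hgt k.lt_succ_self h)]
  · rintro ⟨hkN, hk, hmax⟩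
    refine ⟨hkN, fun _ => hk, fun j hkj hjN hj => ?_⟩
    rcases hmax with rfl | hmax
    exacts [absurd hjN hkj.not_ge, hmax (hP hkj hj)]

theorem Antitone.ncard_setOf_eq_findGreatest {P : ℕ → Prop} [DecidablePred P]
    (hP : Antitone P) (N : ℕ) : {i | 1 ≤ i ∧ i ≤ N ∧ P i}.ncard = Nat.findGreatest P N := by
  have : {i | 1 ≤ i ∧ i ≤ N ∧ P i} = Set.Icc 1 (Nat.findGreatest P N) := by
    ext i
    simp only [Set.mem_ofPred_eq, Set.mem_Icc]
    constructor
    · rintro ⟨hi, hiN, hPi⟩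
      exact ⟨hi, Nat.le_findGreatest hiN hPi⟩
    · rintro ⟨hi, hiK⟩
      exact ⟨hi, hiK.trans (Nat.findGreatest_le N),
        hP hiK (Nat.findGreatest_of_ne_zero rfl (by omega))⟩
  rw [this, ← Finset.coe_Icc, Set.ncard_coe_finset, Nat.card_Icc]
  omega

section ActiveSites

variable {p n : ℕ} {α : Equiv.Perm (Fin n)}

theorem avoidsSet_insertMax_iff (hα : AvoidsSet α (deltaPatterns p)) {i : ℕ} (hi : 1 ≤ i)
    (hin : i ≤ n + 1) : AvoidsSet (insertMax α i) (deltaPatterns p) ↔ ActiveCond p α i := by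
  rw [avoidsSet_deltaPatterns_iff] at hα ⊢
  obtain ⟨h312, h2431, hrev⟩ := hα
  rw [contains_perm312_insertMax_iff α hi, contains_perm2431_insertMax_iff α hi]
  simp only [h312, h2431, false_or, not_not]
  constructor
  · rintro ⟨hdec, hs, hrevβ⟩
    refine ⟨hdec, ?_, hs⟩
    by_contra! hpi
    exact hrevβ (contains_revPerm_of_suffixDecreasing (hdec.insertMax hi) (by omega))
  · rintro ⟨hdec, hip, hs⟩
    exact ⟨hdec, hs, fun h => hrev (contains_revPerm_of_insertMax hi hip h)⟩

theorem activeCond_one (hp : 1 ≤ p) (α : Equiv.Perm (Fin n)) : ActiveCond p α 1 :=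
  ⟨fun a _ ha _ => absurd a.isLt (by omega), hp,
    fun ⟨_, y, _, _, hy, _⟩ => absurd y.isLt (by omega)⟩

theorem activeSite_iff (hα : AvoidsSet α (deltaPatterns p)) (i : ℕ) :
    ActiveSite (deltaPatterns p) α i ↔ 1 ≤ i ∧ i ≤ n + 1 ∧ ActiveCond p α i := by
  exact and_congr_right fun hi => and_congr_right fun hin => avoidsSet_insertMax_iff hα hi hin

theorem numActive_eq_iff (hp : 1 ≤ p) (hα : AvoidsSet α (deltaPatterns p)) {k : ℕ} :
    numActive (deltaPatterns p) α = k ↔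
      k ≤ n + 1 ∧ ActiveCond p α k ∧ (k = n + 1 ∨ ¬ ActiveCond p α (k + 1)) := by
  classical
  have hanti := antitone_activeCond p α
  have hset : {i | ActiveSite (deltaPatterns p) α i} = {i | 1 ≤ i ∧ i ≤ n + 1 ∧ ActiveCond p α i} :=
    Set.ext fun i => activeSite_iff hα i
  rw [numActive, hset, hanti.ncard_setOf_eq_findGreatest,
    Nat.findGreatest_eq_iff_of_antitone hanti (hanti (Nat.zero_le 1) (activeCond_one hp α))]

end ActiveSites

section InsertMaxConditions

variable {p n : ℕ} {α : Equiv.Perm (Fin n)} {i : ℕ}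

theorem insertMax_lt_insertPos_iff (j : Fin (n + 1)) :
    insertMax α i j < insertMax α i (insertPos n i) ↔ j ≠ insertPos n i := by
  rw [← (insertMax α i).injective.ne_iff, insertMax_insertPos]
  exact Fin.lt_last_iff_ne_last

theorem eq_insertPos_of_forall_le {b : Fin (n + 1)}
    (h : ∀ x, insertMax α i x ≤ insertMax α i b) : b = insertPos n i := by
  by_contra hb
  exact (h _).not_gt ((insertMax_lt_insertPos_iff b).2 hb)

theorem suffixDecreasing_insertMax_iff (hi : 1 ≤ i) (h : SuffixDecreasing α (n + 1 - i))
    {t : ℕ} : SuffixDecreasing (insertMax α i) t ↔ n + 1 - i ≤ t := by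
  refine ⟨fun hβ => ?_, (h.insertMax hi).mono⟩
  by_contra! ht
  have hm := val_insertPos (n := n) hi
  have hlt : (⟨n - i, by omega⟩ : Fin (n + 1)) < insertPos n i := by
    rw [Fin.lt_def, hm]; show n - i < n + 1 - i; omega
  exact (hβ _ _ (show t ≤ n - i by omega) hlt).not_gt ((insertMax_lt_insertPos_iff _).2 hlt.ne)

theorem lastDecreasing_insertMax_iff (hi : 1 ≤ i) (hin : i ≤ n + 1)
    (h : SuffixDecreasing α (n + 1 - i)) :
    LastDecreasing (insertMax α i) p ↔ p ≤ i ∨ i = n + 1 := by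
  change SuffixDecreasing _ (n + 1 - p) ↔ _
  rw [suffixDecreasing_insertMax_iff hi h]
  omega

theorem maxIn231_insertMax_iff (hi : 1 ≤ i) :
    MaxIn231 (insertMax α i) ↔ ¬ PrefixBelow α (n + 1 - i) := by
  constructor
  · rintro ⟨x, b, z, hxb, hbz, hmax, hxb', hzx⟩ hQ
    obtain rfl := eq_insertPos_of_forall_le hmax
    obtain ⟨a, rfl⟩ := Fin.exists_succAbove_eq hxb.ne
    obtain ⟨c, rfl⟩ := Fin.exists_succAbove_eq hbz.ne'
    rw [insertMax_succAbove, insertMax_succAbove, Fin.castSucc_lt_castSucc_iff] at hzx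
    exact hzx.not_gt (hQ a c ((succAbove_lt_insertPos_iff hi a).1 hxb)
      ((insertPos_lt_succAbove_iff hi c).1 hbz))
  · intro hQ
    simp only [PrefixBelow, not_forall, not_lt] at hQ
    obtain ⟨x, s, hx, hs, hsx⟩ := hQ
    refine ⟨(insertPos n i).succAbove x, insertPos n i, (insertPos n i).succAbove s,
      (succAbove_lt_insertPos_iff hi x).2 hx, (insertPos_lt_succAbove_iff hi s).2 hs,
      insertMax_le_insertPos, (insertMax_lt_insertPos_iff _).2 (Fin.succAbove_ne _ _), ?_⟩
    rw [insertMax_succAbove, insertMax_succAbove, Fin.castSucc_lt_castSucc_iff]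
    exact hsx.lt_of_ne (α.injective.ne (Fin.ne_of_val_ne (by omega)))

theorem straddles231_insertMax_iff (hi : 1 ≤ i) :
    Straddles231 (insertMax α i) (n + 1 - i) ↔ ¬ PrefixBelow α (n + 1 - i) := by
  have hm := val_insertPos (n := n) hi
  rw [← maxIn231_insertMax_iff hi]
  constructor
  · rintro ⟨x, y, z, hx, hy, hyz, hzx, -⟩
    have hxm : x < insertPos n i := by rw [Fin.lt_def, hm]; exact hx
    exact ⟨x, insertPos n i, z, hxm, lt_of_le_of_lt (by rw [Fin.le_def, hm]; exact hy) hyz,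
      insertMax_le_insertPos, (insertMax_lt_insertPos_iff x).2 hxm.ne, hzx⟩
  · rintro ⟨x, b, z, hxb, hbz, hmax, hxb', hzx⟩
    obtain rfl := eq_insertPos_of_forall_le hmax
    exact ⟨x, insertPos n i, z, by rw [← hm]; exact hxb, hm.ge, hbz, hzx, hxb'⟩

theorem not_straddles231_insertMax (hi : 1 ≤ i) (h : ¬ Straddles231 α (n + 1 - i)) :
    ¬ Straddles231 (insertMax α i) (n + 1 + 1 - i) := by
  have hm := val_insertPos (n := n) hi
  rintro ⟨x, y, z, hx, hy, hyz, hzx, hxy⟩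
  have hmy : insertPos n i < y := by rw [Fin.lt_def, hm]; omega
  obtain ⟨b, rfl⟩ := Fin.exists_succAbove_eq hmy.ne'
  obtain ⟨c, rfl⟩ := Fin.exists_succAbove_eq (hmy.trans hyz).ne'
  obtain ⟨a, rfl⟩ := exists_succAbove_insertPos_of_lt hxy
  simp only [insertMax_succAbove, Fin.castSucc_lt_castSucc_iff,
    Fin.succAbove_lt_succAbove_iff] at hyz hzx hxy
  have hxm : (insertPos n i).succAbove a < insertPos n i := by
    rw [Fin.lt_def, hm]
    exact lt_of_le_of_ne (by omega) (fun h' => Fin.succAbove_ne _ a (Fin.ext (h'.trans hm.symm)))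
  exact h ⟨a, b, c, (succAbove_lt_insertPos_iff hi a).1 hxm,
    (insertPos_lt_succAbove_iff hi b).1 hmy, hyz, hzx, hxy⟩

theorem activeCond_insertMax (hi : 1 ≤ i) (h : ActiveCond p α i) :
    ActiveCond p (insertMax α i) i :=
  ⟨(suffixDecreasing_insertMax_iff hi h.1).2 (by omega), h.2.1, not_straddles231_insertMax hi h.2.2⟩

theorem activeCond_insertMax_succ_iff (hi : 1 ≤ i) (h : ActiveCond p α i) :
    ActiveCond p (insertMax α i) (i + 1) ↔ i + 1 ≤ p ∧ PrefixBelow α (n + 1 - i) := by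
  rw [ActiveCond, show n + 1 + 1 - (i + 1) = n + 1 - i by omega,
    straddles231_insertMax_iff hi, not_not, suffixDecreasing_insertMax_iff hi h.1]
  exact ⟨fun h' => h'.2, fun h' => ⟨le_rfl, h'⟩⟩

theorem not_activeCond_insertMax_add_two (hi : 1 ≤ i) (hin : i ≤ n) (h : ActiveCond p α i) :
    ¬ ActiveCond p (insertMax α i) (i + 2) := fun h' =>
  absurd ((suffixDecreasing_insertMax_iff hi h.1).1 h'.1) (by omega)

open Classical in
theorem numActive_insertMax (hp : 1 ≤ p) (hα : AvoidsSet α (deltaPatterns p)) (hi : 1 ≤ i)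
    (hin : i ≤ n + 1) (h : ActiveCond p α i) :
    numActive (deltaPatterns p) (insertMax α i) =
      if i + 1 ≤ p ∧ PrefixBelow α (n + 1 - i) then i + 1 else i := by
  rw [numActive_eq_iff hp ((avoidsSet_insertMax_iff hα hi hin).2 h)]
  split_ifs with hc
  · refine ⟨by omega, (activeCond_insertMax_succ_iff hi h).2 hc, ?_⟩
    rcases hin.eq_or_lt with rfl | hin
    exacts [Or.inl rfl, Or.inr (not_activeCond_insertMax_add_two hi (by omega) h)]
  · exact ⟨by omega, activeCond_insertMax hi h,
      Or.inr (mt (activeCond_insertMax_succ_iff hi h).1 hc)⟩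

open Classical in
theorem colorD_insertMax (hi : 1 ≤ i) (hin : i ≤ n + 1) (h : SuffixDecreasing α (n + 1 - i)) :
    colorD p (insertMax α i) = if PrefixBelow α (n + 1 - i) ∨ p ≤ i ∨ i = n + 1 then 0 else 1 := by
  rw [colorD, maxIn231_insertMax_iff hi, lastDecreasing_insertMax_iff hi hin h]
  split_ifs <;> tauto

end InsertMaxConditions

section Color

variable {p n : ℕ} {α : Equiv.Perm (Fin n)} {t : ℕ}

theorem colorD_eq_zero_iff : colorD p α = 0 ↔ (MaxIn231 α → LastDecreasing α p) := by
  unfold colorD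
  split_ifs with h
  · simp only [false_iff]; tauto
  · simp only [true_iff]; tauto

theorem not_maxIn231_of_prefixBelow (hdec : SuffixDecreasing α t) (hQ : PrefixBelow α t)
    (ht : t < n) : ¬ MaxIn231 α := by
  rintro ⟨a, b, c, hab, hbc, hmax, hab', hca⟩
  by_cases hb : t ≤ (b : ℕ)
  · by_cases ha : (a : ℕ) < t
    · exact hca.not_gt (hQ a c ha (hb.trans (Fin.lt_def.1 hbc).le))
    · exact hab'.not_gt (hdec a b (by omega) hab)
  · exact (hmax ⟨n - 1, by omega⟩).not_gt (hQ b _ (by omega) (by simp only; omega))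

theorem not_maxIn231_of_suffixDecreasing_zero (hdec : SuffixDecreasing α 0) : ¬ MaxIn231 α :=
  fun ⟨a, b, _, hab, _, _, hab', _⟩ => hab'.not_gt (hdec a b (Nat.zero_le _) hab)

theorem SuffixDecreasing.lt_of_not_straddles231 (hdec : SuffixDecreasing α t)
    (hs : ¬ Straddles231 α t) {x s y : Fin n} (hx : (x : ℕ) < t) (hst : t ≤ (s : ℕ))
    (hsx : α s < α x) (hy : t ≤ (y : ℕ)) : α y < α x := by
  by_contra! hxy
  replace hxy := hxy.lt_of_ne (α.injective.ne (Fin.ne_of_val_ne (by omega)))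
  rcases lt_trichotomy y s with hys | rfl | hsy
  · exact hs ⟨x, y, s, hx, hy, hys, hsx, hxy⟩
  · exact hxy.asymm hsx
  · exact (hdec s y hst hsy).asymm (hsx.trans hxy)

theorem SuffixDecreasing.pred_of_not_prefixBelow (h312 : ¬ Contains perm312 α)
    (hdec : SuffixDecreasing α t) (hs : ¬ Straddles231 α t) (hQ : ¬ PrefixBelow α t) :
    SuffixDecreasing α (t - 1) := by
  simp only [PrefixBelow, not_forall, not_lt] at hQ
  obtain ⟨x, s, hx, hst, hsx⟩ := hQ
  replace hsx := hsx.lt_of_ne (α.injective.ne (Fin.ne_of_val_ne (by omega)))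
  intro a b ha hab
  by_cases hat : t ≤ (a : ℕ)
  · exact hdec a b hat hab
  by_contra! hba
  replace hba := hba.lt_of_ne (α.injective.ne hab.ne)
  have hbx := hdec.lt_of_not_straddles231 hs hx hst hsx (y := b) (by rw [Fin.lt_def] at hab; omega)
  rcases (show x ≤ a by rw [Fin.le_def]; omega).lt_or_eq with hxa | rfl
  · exact h312 ((contains_perm312_iff α).2 ⟨x, a, b, hxa, hab, hba, hbx⟩)
  · exact hba.asymm hbx

theorem forall_le_of_straddles (h312 : ¬ Contains perm312 α) (h2431 : ¬ Contains perm2431 α)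
    {x y z : Fin n} (hdec : SuffixDecreasing α y) (hxy : x < y) (hyz : y < z)
    (hzx : α z < α x) (hxy' : α x < α y) (w : Fin n) : α w ≤ α y := by
  by_contra! hw
  rcases lt_trichotomy w x with hwx | rfl | hxw
  · exact h312 ((contains_perm312_iff α).2 ⟨w, x, y, hwx, hxy, hxy', hw⟩)
  · exact hxy'.asymm hw
  rcases lt_trichotomy w y with hwy | rfl | hyw
  · exact h2431 ((contains_perm2431_iff α).2 ⟨x, w, y, z, hxw, hwy, hyz, hzx, hxy', hw⟩)
  · exact hw.false
  · exact (hdec y w le_rfl hyw).asymm hw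

theorem not_straddles231_of_colorD_eq_zero (h312 : ¬ Contains perm312 α)
    (h2431 : ¬ Contains perm2431 α) (hdec : SuffixDecreasing α t)
    (hs : ¬ Straddles231 α (t + 1)) (hd : colorD p α = 0) (htp : n < t + p) :
    ¬ Straddles231 α t := by
  rintro ⟨x, y, z, hx, hy, hyz, hzx, hxy⟩
  have hyt : (y : ℕ) = t := by
    by_contra hyt
    exact hs ⟨x, y, z, by omega, by omega, hyz, hzx, hxy⟩
  have hmax := forall_le_of_straddles h312 h2431 (hdec.mono hyt.ge)
    (by rw [Fin.lt_def]; omega) hyz hzx hxy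
  have hlast : LastDecreasing α p :=
    colorD_eq_zero_iff.1 hd ⟨x, y, z, by rw [Fin.lt_def]; omega, hyz, hmax, hxy, hzx⟩
  exact (hmax ⟨y - 1, by omega⟩).not_gt
    (hlast _ y (by simp only; omega) (by rw [Fin.lt_def]; simp only; omega))

theorem prefixBelow_of_colorD_eq_zero (h312 : ¬ Contains perm312 α)
    (h2431 : ¬ Contains perm2431 α) {k : ℕ} (hk : ActiveCond p α k)
    (hmax : k = n + 1 ∨ ¬ ActiveCond p α (k + 1)) (hd : colorD p α = 0) (hkp : k < p) :
    PrefixBelow α (n + 1 - k) := by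
  by_contra hQ
  rcases Nat.lt_or_ge k (n + 1) with hkn | hkn
  · apply hmax.resolve_left hkn.ne
    have hdec := hk.1.pred_of_not_prefixBelow h312 hk.2.2 hQ
    rw [show n + 1 - k - 1 = n + 1 - (k + 1) by omega] at hdec
    refine ⟨hdec, hkp, not_straddles231_of_colorD_eq_zero h312 h2431 hdec ?_ hd (by omega)⟩
    rw [show n + 1 - (k + 1) + 1 = n + 1 - k by omega]
    exact hk.2.2
  · exact hQ fun x _ hx _ => absurd hx (by omega)

theorem colorD_eq_zero_of_activeCond_self (h312 : ¬ Contains perm312 α) (hp : 2 ≤ p)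
    (hpn : p ≤ n + 1) (h : ActiveCond p α p) : colorD p α = 0 := by
  rw [colorD_eq_zero_iff]
  by_cases hQ : PrefixBelow α (n + 1 - p)
  · exact fun hM => absurd hM (not_maxIn231_of_prefixBelow h.1 hQ (by omega))
  · intro _
    have := h.1.pred_of_not_prefixBelow h312 h.2.2 hQ
    rwa [show n + 1 - p - 1 = n - p by omega] at this

end Color

section Criteria

variable {p n : ℕ} {α : Equiv.Perm (Fin n)} {k i : ℕ}

theorem eq_and_colorD_eq_zero_of_prefixBelow (hk : ActiveCond p α k) (hkn : k ≤ n + 1)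
    (hi : 2 ≤ i) (hik : i ≤ k) (hQ : PrefixBelow α (n + 1 - i)) : i = k ∧ colorD p α = 0 := by
  have hik' : i = k := by
    by_contra hne
    exact (hk.1 ⟨n - i, by omega⟩ ⟨n + 1 - i, by omega⟩ (by simp only; omega)
      (by rw [Fin.lt_def]; simp only; omega)).asymm
      (hQ _ _ (by simp only; omega) (by simp only; omega))
  subst hik'
  exact ⟨rfl, colorD_eq_zero_iff.2 fun hM =>
    absurd hM (not_maxIn231_of_prefixBelow hk.1 hQ (by omega))⟩

theorem numActive_growth_condition_iff (hp : 2 ≤ p) (hα : AvoidsSet α (deltaPatterns p))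
    (hk : numActive (deltaPatterns p) α = k) (hi : 1 ≤ i) (hik : i ≤ k) :
    (i = 1 ∨ (i = k ∧ colorD p α = 0 ∧ k < p)) ↔ i + 1 ≤ p ∧ PrefixBelow α (n + 1 - i) := by
  obtain ⟨h312, h2431, -⟩ := (avoidsSet_deltaPatterns_iff α p).1 hα
  obtain ⟨hkn, hact, hmax⟩ := (numActive_eq_iff (by omega) hα).1 hk
  constructor
  · rintro (rfl | ⟨rfl, hd, hip⟩)
    · exact ⟨by omega, fun _ s _ hs => absurd s.isLt (by omega)⟩
    · exact ⟨hip, prefixBelow_of_colorD_eq_zero h312 h2431 hact hmax hd hip⟩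
  · rintro ⟨hip, hQ⟩
    rcases (show i = 1 ∨ 2 ≤ i by omega) with h1 | h2
    · exact Or.inl h1
    · obtain ⟨rfl, hd⟩ := eq_and_colorD_eq_zero_of_prefixBelow hact hkn h2 hik hQ
      exact Or.inr ⟨rfl, hd, hip⟩

theorem colorD_zero_condition_iff (hp : 2 ≤ p) (hα : AvoidsSet α (deltaPatterns p))
    (hk : numActive (deltaPatterns p) α = k) (hi : 1 ≤ i) (hik : i ≤ k) :
    (i = 1 ∨ (i = k ∧ colorD p α = 0)) ↔ PrefixBelow α (n + 1 - i) ∨ p ≤ i ∨ i = n + 1 := by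
  obtain ⟨h312, h2431, -⟩ := (avoidsSet_deltaPatterns_iff α p).1 hα
  obtain ⟨hkn, hact, hmax⟩ := (numActive_eq_iff (by omega) hα).1 hk
  constructor
  · rintro (rfl | ⟨rfl, hd⟩)
    · exact Or.inl fun _ s _ hs => absurd s.isLt (by omega)
    · rcases Nat.lt_or_ge i p with hip | hip
      exacts [Or.inl (prefixBelow_of_colorD_eq_zero h312 h2431 hact hmax hd hip),
        Or.inr (Or.inl hip)]
  · intro h
    rcases (show i = 1 ∨ 2 ≤ i by omega) with h1 | h2
    · exact Or.inl h1
    refine Or.inr ?_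
    rcases h with hQ | hpi | rfl
    · exact eq_and_colorD_eq_zero_of_prefixBelow hact hkn h2 hik hQ
    · obtain rfl : i = k := by have := hact.2.1; omega
      obtain rfl : i = p := by have := hact.2.1; omega
      exact ⟨rfl, colorD_eq_zero_of_activeCond_self h312 hp hkn hact⟩
    · obtain rfl : k = n + 1 := by omega
      exact ⟨rfl, colorD_eq_zero_iff.2 fun hM =>
        absurd hM (not_maxIn231_of_suffixDecreasing_zero (by simpa using hact.1))⟩

end Criteria

/-- For `p ≥ 2` and `P = {312, 2431, (p+1)p…21}`, with the color
`d(α) = 1` iff the largest entry of `α` plays the role of `3` in an occurrence of `231`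
and the last `p` entries of `α` are not decreasing (`d(α) = 0` otherwise): every
`α ∈ S_n(P)` has its first site active, and if `α ∈ S_n(P)` has exactly `k` active
sites and `1 ≤ i ≤ k`, then (a) `α^{↓i}` has `i + 1` active sites if `i = 1` or
(`i = k`, `d(α) = 0` and `k < p`), and `i` active sites otherwise; (b) `d(α^{↓i}) = 0`
if `i = 1` or (`i = k` and `d(α) = 0`), and `d(α^{↓i}) = 1` otherwise. Hence `P` is a
colored regular set of forbidden patterns with colors `{0, 1}`. -/
theorem cRegular_312_2431_delta (p : ℕ) (hp : 2 ≤ p) (P : PatternSet)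
    (hP : P = {⟨3, perm312⟩, ⟨4, perm2431⟩,
      ⟨p + 1, (Fin.revPerm : Equiv.Perm (Fin (p + 1)))⟩}) :
    (∀ (n : ℕ) (α : Equiv.Perm (Fin n)), AvoidsSet α P → ActiveSite P α 1) ∧
    (∀ (n : ℕ) (α : Equiv.Perm (Fin n)) (k i : ℕ), AvoidsSet α P →
      numActive P α = k → 1 ≤ i → i ≤ k →
      (numActive P (insertMax α i) =
        if i = 1 ∨ (i = k ∧ colorD p α = 0 ∧ k < p) then i + 1 else i) ∧
      (colorD p (insertMax α i) =
        if i = 1 ∨ (i = k ∧ colorD p α = 0) then 0 else 1)) := by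
  subst hP
  refine ⟨fun n α hα => (activeSite_iff hα 1).2 ⟨le_rfl, by omega, activeCond_one (by omega) α⟩,
    fun n α k i hα hk hi hik => ?_⟩
  obtain ⟨hkn, hact, -⟩ := (numActive_eq_iff (by omega) hα).1 hk
  have hacti : ActiveCond p α i := antitone_activeCond p α hik hact
  rw [numActive_insertMax (by omega) hα hi (by omega) hacti, colorD_insertMax hi (by omega) hacti.1]
  constructor <;> congr 1 <;> apply propext
  exacts [(numActive_growth_condition_iff hp hα hk hi hik).symm,
    (colorD_zero_condition_iff hp hα hk hi hik).symm]
end
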